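/- For every u ∈ {1,…,m}, X(1, ẽ₂(u), ẽ₃(u)) = X(I_u, e₂·I_u, e₃·I_u) + S·(1 − I_u), where S := Σ_{α+β+γ=N} C_{α,β,γ}·a_u^β·b_u^γ ∈ ℂ. In particular the two characteristic equations X(1, ẽ₂(u), ẽ₃(u)) = 0 and X(I_u, e₂·I_u, e₃·I_u) = 0 generate the same system of equations in the coefficients: both equal S plus one and the same element of the ℂ-span of {I_{m+1},…,I_n} multiplied into their respective idempotent parts, X(1,ẽ₂(u),ẽ₃(u)) = S·1 + W and X(I_u, e₂·I_u, e₃·I_u) = S·I_u + W for a common W in the ℂ-span of {I_{m+1},…,I_n}. -/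

import Mathlib

/-!
Split `1 = I_u + (1 - I_u)` into orthogonal idempotents. As `X` is homogeneous of degree
`N ≥ 1`, multiplying `X(g₁, g₂, g₃)` by an idempotent `e` gives `X(e g₁, e g₂, e g₃)`. Now
`I_u ẽᵢ(u) = eᵢ I_u`, while `1 - I_u` annihilates the radical part of `ẽᵢ(u)` and leaves only
the scalars `a_u`, `b_u`; this yields `X(1, ẽ₂, ẽ₃) = X(I_u, e₂ I_u, e₃ I_u) + S (1 - I_u)`.
Since the radical span is closed under multiplication, `X(1, ẽ₂, ẽ₃) - S` lies in it.
-/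

open scoped Classical

/-- The characteristic polynomial `X(g₁,g₂,g₃) = Σ_{α+β+γ=N} C_{α,β,γ} g₁^α g₂^β g₃^γ`. -/
def charPoly {A : Type} [CommRing A] [Algebra ℂ A] (N : ℕ) (C : ℕ → ℕ → ℕ → ℂ)
    (g₁ g₂ g₃ : A) : A :=
  ∑ p ∈ (Finset.range (N + 1) ×ˢ Finset.range (N + 1) ×ˢ Finset.range (N + 1)).filter
      (fun p => p.1 + p.2.1 + p.2.2 = N),
    C p.1 p.2.1 p.2.2 • (g₁ ^ p.1 * g₂ ^ p.2.1 * g₃ ^ p.2.2)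

section charPoly

variable {A : Type} [CommRing A] [Algebra ℂ A] (N : ℕ) (C : ℕ → ℕ → ℕ → ℂ)

theorem map_charPoly {B : Type} [CommRing B] [Algebra ℂ B] (f : A →ₐ[ℂ] B) (g₁ g₂ g₃ : A) :
    f (charPoly N C g₁ g₂ g₃) = charPoly N C (f g₁) (f g₂) (f g₃) := by
  simp only [charPoly, map_sum, map_smul, map_mul, map_pow]

theorem charPoly_mul_mul_mul (t g₁ g₂ g₃ : A) :
    charPoly N C (t * g₁) (t * g₂) (t * g₃) = t ^ N * charPoly N C g₁ g₂ g₃ := by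
  rw [charPoly, charPoly, Finset.mul_sum]
  refine Finset.sum_congr rfl fun p hp => ?_
  rw [← (Finset.mem_filter.1 hp).2, mul_smul_comm]
  ring_nf

theorem IsIdempotentElem.mul_charPoly {e : A} (he : IsIdempotentElem e) (hN : N ≠ 0)
    (g₁ g₂ g₃ : A) :
    e * charPoly N C g₁ g₂ g₃ = charPoly N C (e * g₁) (e * g₂) (e * g₃) := by
  rw [charPoly_mul_mul_mul, he.pow_eq hN]

theorem charPoly_one_eq_sum (c₂ c₃ : ℂ) :
    charPoly N C 1 c₂ c₃ = ∑ p ∈ (Finset.range (N + 1) ×ˢ Finset.range (N + 1) ×ˢ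
        Finset.range (N + 1)).filter (fun p => p.1 + p.2.1 + p.2.2 = N),
      C p.1 p.2.1 p.2.2 * c₂ ^ p.2.1 * c₃ ^ p.2.2 := by
  simp only [charPoly, one_pow, one_mul, smul_eq_mul, mul_assoc]

theorem IsIdempotentElem.charPoly_algebraMap_add_mul {e : A} (he : IsIdempotentElem e)
    (hN : N ≠ 0) (c₂ c₃ : ℂ) (x₂ x₃ : A) :
    charPoly N C 1 (algebraMap ℂ A c₂ + e * x₂) (algebraMap ℂ A c₃ + e * x₃) =
      e * charPoly N C 1 (algebraMap ℂ A c₂ + e * x₂) (algebraMap ℂ A c₃ + e * x₃) +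
        charPoly N C 1 c₂ c₃ • (1 - e) := by
  have hkill : ∀ (c : ℂ) (x : A),
      (1 - e) * (algebraMap ℂ A c + e * x) = (1 - e) * algebraMap ℂ A c := by
    intro c x
    rw [mul_add, ← mul_assoc, he.one_sub_mul_self, zero_mul, add_zero]
  have hscalar : charPoly N C 1 (algebraMap ℂ A c₂) (algebraMap ℂ A c₃) =
      algebraMap ℂ A (charPoly N C 1 c₂ c₃) := by
    simpa using (map_charPoly N C (Algebra.ofId ℂ A) 1 c₂ c₃).symm
  calc _ = e * charPoly N C 1 (algebraMap ℂ A c₂ + e * x₂) (algebraMap ℂ A c₃ + e * x₃) +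
        (1 - e) * charPoly N C 1 (algebraMap ℂ A c₂ + e * x₂) (algebraMap ℂ A c₃ + e * x₃) := by
          ring
    _ = _ := by
      rw [he.one_sub.mul_charPoly N C hN, hkill, hkill, ← he.one_sub.mul_charPoly N C hN,
        hscalar, Algebra.algebraMap_eq_smul_one (charPoly N C 1 c₂ c₃), mul_smul_comm, mul_one]

theorem exists_charPoly_algebraMap_add_eq (s : NonUnitalSubalgebra ℂ A) (c₁ c₂ c₃ : ℂ)
    {x₁ x₂ x₃ : A} (h₁ : x₁ ∈ s) (h₂ : x₂ ∈ s) (h₃ : x₃ ∈ s) :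
    ∃ w ∈ s, charPoly N C (algebraMap ℂ A c₁ + x₁) (algebraMap ℂ A c₂ + x₂)
      (algebraMap ℂ A c₃ + x₃) = algebraMap ℂ A (charPoly N C c₁ c₂ c₃) + w := by
  -- Compute in `ℂ ⊕ s`: the scalar part of `charPoly` is `charPoly` of the scalar parts.
  let z : ℂ → s → Unitization ℂ s := fun c x => Unitization.inl c + (x : Unitization ℂ s)
  let P := charPoly N C (z c₁ ⟨x₁, h₁⟩) (z c₂ ⟨x₂, h₂⟩) (z c₃ ⟨x₃, h₃⟩)
  have hA := map_charPoly N C (NonUnitalSubalgebra.unitization s) (z c₁ ⟨x₁, h₁⟩)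
    (z c₂ ⟨x₂, h₂⟩) (z c₃ ⟨x₃, h₃⟩)
  have hℂ := map_charPoly N C (Unitization.fstHom ℂ s) (z c₁ ⟨x₁, h₁⟩)
    (z c₂ ⟨x₂, h₂⟩) (z c₃ ⟨x₃, h₃⟩)
  simp only [z, NonUnitalSubalgebra.unitization_apply, Unitization.fstHom_apply,
    Unitization.fst_add, Unitization.snd_add, Unitization.fst_inl, Unitization.snd_inl,
    Unitization.fst_inr, Unitization.snd_inr, add_zero, zero_add] at hA hℂ
  exact ⟨P.snd, P.snd.2, by rw [← hA, ← hℂ]⟩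

end charPoly

section CartanBasis

variable {A : Type} [CommRing A] [Algebra ℂ A] {n m : ℕ} {I : Fin n → A}

theorem span_radical_mul_mem
    (h2 : ∀ r s : Fin n, m ≤ (r : ℕ) → m ≤ (s : ℕ) →
      I r * I s ∈ Submodule.span ℂ (I '' {k : Fin n | max (r : ℕ) (s : ℕ) < (k : ℕ)}))
    {x y : A} (hx : x ∈ Submodule.span ℂ (I '' {k : Fin n | m ≤ (k : ℕ)}))
    (hy : y ∈ Submodule.span ℂ (I '' {k : Fin n | m ≤ (k : ℕ)})) :
    x * y ∈ Submodule.span ℂ (I '' {k : Fin n | m ≤ (k : ℕ)}) := by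
  have hle : Submodule.span ℂ (I '' {k : Fin n | m ≤ (k : ℕ)}) *
      Submodule.span ℂ (I '' {k : Fin n | m ≤ (k : ℕ)}) ≤
      Submodule.span ℂ (I '' {k : Fin n | m ≤ (k : ℕ)}) := by
    rw [Submodule.span_mul_span, Submodule.span_le]
    rintro _ ⟨_, ⟨r, hr, rfl⟩, _, ⟨s, hs, rfl⟩, rfl⟩
    refine Submodule.span_mono ?_ (h2 r s hr hs)
    rintro _ ⟨k, hk, rfl⟩
    exact ⟨k, by simp only [Set.mem_ofPred_eq, max_lt_iff] at hr hk ⊢; omega, rfl⟩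
  exact hle (Submodule.mul_mem_mul hx hy)

theorem mul_mem_span_radical
    (h3 : ∀ s : Fin n, m ≤ (s : ℕ) → ∃ u : Fin n, (u : ℕ) < m ∧
      I u * I s = I s ∧ ∀ r : Fin n, (r : ℕ) < m → r ≠ u → I r * I s = 0)
    {u : Fin n} (hu : (u : ℕ) < m) {x : A}
    (hx : x ∈ Submodule.span ℂ (I '' {k : Fin n | m ≤ (k : ℕ)})) :
    I u * x ∈ Submodule.span ℂ (I '' {k : Fin n | m ≤ (k : ℕ)}) := by
  induction hx using Submodule.span_induction with
  | mem _ hs =>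
    obtain ⟨s, hs, rfl⟩ := hs
    obtain ⟨v, -, hvs, hother⟩ := h3 s hs
    by_cases huv : u = v
    · rw [huv, hvs]
      exact Submodule.subset_span ⟨s, hs, rfl⟩
    · rw [hother u hu huv]
      exact zero_mem _
  | zero => simp
  | add x y _ _ hx hy => simpa [mul_add] using add_mem hx hy
  | smul c x _ hx => simpa [mul_smul_comm] using Submodule.smul_mem _ c hx

theorem sum_smul_mul_eq_mul_algebraMap_add
    (h1 : ∀ r s : Fin n, (r : ℕ) < m → (s : ℕ) < m →
      I r * I s = if r = s then I r else 0)
    {u : Fin n} (hu : (u : ℕ) < m) (c : Fin n → ℂ) :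
    (∑ r, c r • I r) * I u = I u * (algebraMap ℂ A (c u) +
      I u * ∑ r ∈ Finset.univ.filter (fun r : Fin n => m ≤ (r : ℕ)), c r • I r) := by
  have hIu : I u * I u = I u := by simpa using h1 u u hu hu
  have hsemisimple : ∑ r ∈ Finset.univ.filter (fun r : Fin n => (r : ℕ) < m), c r • I r * I u =
      c u • I u := by
    rw [Finset.sum_eq_single_of_mem u (by simp [hu])]
    · rw [smul_mul_assoc, hIu]
    · intro r hr hne
      rw [smul_mul_assoc, h1 r u (Finset.mem_filter.1 hr).2 hu, if_neg hne, smul_zero]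
  rw [Finset.sum_mul, ← Finset.sum_filter_add_sum_filter_not _ (fun r : Fin n => (r : ℕ) < m),
    hsemisimple, mul_add, ← mul_assoc, hIu, Finset.mul_sum, mul_comm, ← Algebra.smul_def]
  simp only [not_lt, smul_mul_assoc, mul_smul_comm, mul_comm (I _) (I u)]

end CartanBasis

theorem stmt4_general
    (n m : ℕ)
    (A : Type) [CommRing A] [Algebra ℂ A]
    (I : Fin n → A)
    (h1 : ∀ r s : Fin n, (r : ℕ) < m → (s : ℕ) < m →
      I r * I s = if r = s then I r else 0)
    (h2 : ∀ r s : Fin n, m ≤ (r : ℕ) → m ≤ (s : ℕ) →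
      I r * I s ∈ Submodule.span ℂ (I '' {k : Fin n | max (r : ℕ) (s : ℕ) < (k : ℕ)}))
    (h3 : ∀ s : Fin n, m ≤ (s : ℕ) → ∃ u : Fin n, (u : ℕ) < m ∧
      I u * I s = I s ∧ ∀ r : Fin n, (r : ℕ) < m → r ≠ u → I r * I s = 0)
    (N : ℕ) (hN : 1 ≤ N) (C : ℕ → ℕ → ℕ → ℂ)
    (a b : Fin n → ℂ) (e₂ e₃ : A)
    (he₂ : e₂ = ∑ r, a r • I r) (he₃ : e₃ = ∑ r, b r • I r)
    (re₂ re₃ : A)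
    (hre₂ : re₂ = ∑ r ∈ Finset.univ.filter (fun r : Fin n => m ≤ (r : ℕ)), a r • I r)
    (hre₃ : re₃ = ∑ r ∈ Finset.univ.filter (fun r : Fin n => m ≤ (r : ℕ)), b r • I r)
    (te₂ te₃ : Fin n → A)
    (hte₂ : ∀ u : Fin n, te₂ u = algebraMap ℂ A (a u) + I u * re₂)
    (hte₃ : ∀ u : Fin n, te₃ u = algebraMap ℂ A (b u) + I u * re₃)
    (u : Fin n) (hu : (u : ℕ) < m)
    (S : ℂ)
    (hS : S = ∑ p ∈ (Finset.range (N + 1) ×ˢ Finset.range (N + 1) ×ˢ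
        Finset.range (N + 1)).filter (fun p => p.1 + p.2.1 + p.2.2 = N),
      C p.1 p.2.1 p.2.2 * a u ^ p.2.1 * b u ^ p.2.2) :
    charPoly N C 1 (te₂ u) (te₃ u) =
        charPoly N C (I u) (e₂ * I u) (e₃ * I u) + S • ((1 : A) - I u) ∧
      ∃ W ∈ Submodule.span ℂ (I '' {k : Fin n | m ≤ (k : ℕ)}),
        charPoly N C 1 (te₂ u) (te₃ u) = S • (1 : A) + W ∧
          charPoly N C (I u) (e₂ * I u) (e₃ * I u) = S • I u + W := by
  have he : IsIdempotentElem (I u) := (h1 u u hu hu).trans (if_pos rfl)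
  have hN0 : N ≠ 0 := by omega
  have hS' : charPoly N C 1 (a u) (b u) = S := by rw [charPoly_one_eq_sum, hS]
  have hX₂ : charPoly N C (I u) (e₂ * I u) (e₃ * I u) =
      I u * charPoly N C 1 (te₂ u) (te₃ u) := by
    rw [he.mul_charPoly N C hN0, mul_one, hte₂, hte₃, hre₂, hre₃, he₂, he₃,
      sum_smul_mul_eq_mul_algebraMap_add h1 hu, sum_smul_mul_eq_mul_algebraMap_add h1 hu]
  have hX₁ : charPoly N C 1 (te₂ u) (te₃ u) =
      charPoly N C (I u) (e₂ * I u) (e₃ * I u) + S • (1 - I u) := by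
    rw [hX₂, ← hS', hte₂, hte₃]
    exact he.charPoly_algebraMap_add_mul N C hN0 (a u) (b u) re₂ re₃
  let R := (Submodule.span ℂ (I '' {k : Fin n | m ≤ (k : ℕ)})).toNonUnitalSubalgebra
    fun _ _ => span_radical_mul_mem h2
  have hrad : ∀ c : Fin n → ℂ,
      I u * ∑ r ∈ Finset.univ.filter (fun r : Fin n => m ≤ (r : ℕ)), c r • I r ∈ R := fun c =>
    mul_mem_span_radical h3 hu <| Submodule.sum_mem _ fun r hr =>
      Submodule.smul_mem _ _ (Submodule.subset_span ⟨r, (Finset.mem_filter.1 hr).2, rfl⟩)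
  obtain ⟨W, hW, hXW⟩ := exists_charPoly_algebraMap_add_eq N C R 1 (a u) (b u) (zero_mem R)
    (hre₂ ▸ hrad a) (hre₃ ▸ hrad b)
  rw [map_one, add_zero, ← hte₂, ← hte₃, hS', Algebra.algebraMap_eq_smul_one S] at hXW
  refine ⟨hX₁, W, hW, hXW, ?_⟩
  rw [hX₁, smul_sub] at hXW
  linear_combination hXW

theorem stmt4
    (n m : ℕ) (hm : 1 ≤ m) (hmn : m ≤ n)
    (A : Type) [CommRing A] [Algebra ℂ A]
    (I : Fin n → A) (bI : Module.Basis (Fin n) ℂ A) (hbI : ∀ k, bI k = I k)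
    (h1 : ∀ r s : Fin n, (r : ℕ) < m → (s : ℕ) < m →
      I r * I s = if r = s then I r else 0)
    (h2 : ∀ r s : Fin n, m ≤ (r : ℕ) → m ≤ (s : ℕ) →
      I r * I s ∈ Submodule.span ℂ (I '' {k : Fin n | max (r : ℕ) (s : ℕ) < (k : ℕ)}))
    (h3 : ∀ s : Fin n, m ≤ (s : ℕ) → ∃ u : Fin n, (u : ℕ) < m ∧
      I u * I s = I s ∧ ∀ r : Fin n, (r : ℕ) < m → r ≠ u → I r * I s = 0)
    (N : ℕ) (hN : 1 ≤ N) (C : ℕ → ℕ → ℕ → ℂ)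
    (a b : Fin n → ℂ) (e₂ e₃ : A)
    (he₂ : e₂ = ∑ r, a r • I r) (he₃ : e₃ = ∑ r, b r • I r)
    (re₂ re₃ : A)
    (hre₂ : re₂ = ∑ r ∈ Finset.univ.filter (fun r : Fin n => m ≤ (r : ℕ)), a r • I r)
    (hre₃ : re₃ = ∑ r ∈ Finset.univ.filter (fun r : Fin n => m ≤ (r : ℕ)), b r • I r)
    (te₂ te₃ : Fin n → A)
    (hte₂ : ∀ u : Fin n, te₂ u = algebraMap ℂ A (a u) + I u * re₂)
    (hte₃ : ∀ u : Fin n, te₃ u = algebraMap ℂ A (b u) + I u * re₃)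
    (u : Fin n) (hu : (u : ℕ) < m)
    (S : ℂ)
    (hS : S = ∑ p ∈ (Finset.range (N + 1) ×ˢ Finset.range (N + 1) ×ˢ
        Finset.range (N + 1)).filter (fun p => p.1 + p.2.1 + p.2.2 = N),
      C p.1 p.2.1 p.2.2 * a u ^ p.2.1 * b u ^ p.2.2) :
    charPoly N C 1 (te₂ u) (te₃ u) =
        charPoly N C (I u) (e₂ * I u) (e₃ * I u) + S • ((1 : A) - I u) ∧
      ∃ W ∈ Submodule.span ℂ (I '' {k : Fin n | m ≤ (k : ℕ)}),
        charPoly N C 1 (te₂ u) (te₃ u) = S • (1 : A) + W ∧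
          charPoly N C (I u) (e₂ * I u) (e₃ * I u) = S • I u + W :=
  stmt4_general n m A I h1 h2 h3 N hN C a b e₂ e₃ he₂ he₃ re₂ re₃ hre₂ hre₃ te₂ te₃ hte₂ hte₃ u hu S
    hS
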